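/- arXiv:hep-th/9505063 — 3 statements merged into one kernel-verified Lean document; each statement's English description precedes it below -/
import Mathlib

section
/- Let A be the unital *-algebra generated by elements c, c*, N subject to c² = 0, c c* + c* c = 1, [N, c] = -c, [N, c*] = c*, with N* = N. Then every linear, positive, normalized functional ω on A satisfying ω(A N) = 0 for all A (a vacuum state) is completely determined by the real number v = ω(c c*), and necessarily v ∈ [0,1]. -/
open ComplexOrder

lemma vac_nb_zero {A : Type*} [Ring A] [Algebra ℂ A] [StarRing A] [StarModule ℂ A]
    (N : A) (hNsa : star N = N) (ω : A →ₗ[ℂ] ℂ)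
    (hpos : ∀ a : A, 0 ≤ ω (star a * a))
    (hvac : ∀ a : A, ω (a * N) = 0) (b : A) : ω (N * b) = 0 := by
  set z := ω (N * b) with hz
  set w := ω (star b * b) with hw
  have hw0 : 0 ≤ w := hpos b
  have hwre : 0 ≤ w.re := (Complex.le_def.mp hw0).1
  have key : ∀ t : ℂ, 0 ≤ t * z + (starRingEnd ℂ t * t) * w := by
    intro t
    have h1 : star (N + t • b) * (N + t • b)
        = N * N + t • (N * b) + (starRingEnd ℂ t) • (star b * N)
          + (starRingEnd ℂ t * t) • (star b * b) := by
      simp only [star_add, star_smul, hNsa, add_mul, mul_add, smul_mul_assoc,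
        mul_smul_comm, smul_smul, smul_add, Complex.star_def]
      rw [mul_comm t ((starRingEnd ℂ) t)]; abel
    have h2 := hpos (N + t • b)
    rw [h1] at h2
    have hNN : ω (N * N) = 0 := hvac N
    have hbN : ω (star b * N) = 0 := hvac (star b)
    simpa [map_add, map_smul, hNN, hbN, smul_eq_mul, ← hz, ← hw] using h2
  by_contra hzne
  have hq : 0 < Complex.normSq z := Complex.normSq_pos.mpr hzne
  set s : ℝ := (2 * (w.re + 1))⁻¹ with hs
  have hspos : 0 < s := by positivity
  have hswre : s * w.re ≤ 1 / 2 := by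
    rw [hs]
    rw [inv_mul_le_iff₀ (by positivity)]
    nlinarith
  have hkey := key (-(s : ℂ) * (starRingEnd ℂ z))
  have hc1 : (-(s : ℂ) * (starRingEnd ℂ z)) * z = -(s : ℂ) * Complex.normSq z := by
    rw [mul_assoc]
    congr 1
    rw [mul_comm]
    exact Complex.mul_conj z
  have hc2 : starRingEnd ℂ (-(s : ℂ) * (starRingEnd ℂ z)) * (-(s : ℂ) * (starRingEnd ℂ z))
      = (s : ℂ) ^ 2 * Complex.normSq z := by
    simp only [map_mul, map_neg, Complex.conj_ofReal, Complex.conj_conj]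
    rw [show (-(s:ℂ) * z) * (-(s:ℂ) * starRingEnd ℂ z) = (s:ℂ)^2 * (z * starRingEnd ℂ z) by ring,
      Complex.mul_conj]
  rw [hc1, hc2] at hkey
  have hre := (Complex.le_def.mp hkey).1
  set q := Complex.normSq z with hqdef
  simp only [← Complex.ofReal_pow, ← Complex.ofReal_mul, ← Complex.ofReal_neg,
    Complex.add_re, Complex.mul_re, Complex.ofReal_re, Complex.ofReal_im,
    Complex.zero_re, zero_mul, sub_zero] at hre
  have hprod : s * q * (s * w.re) ≤ s * q * (1/2) :=
    mul_le_mul_of_nonneg_left hswre (mul_pos hspos hq).le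
  nlinarith [hre, mul_pos hspos hq, hprod]

/-- A vacuum state on the extended CAR algebra `A_{U(1)}(ℂ)`
(generated by `c`, `star c`, `N` with `c² = 0`, `c c* + c* c = 1`,
`[N,c] = -c`, `[N,c*] = c*`, `N* = N`) is completely determined by
`v = ω (c * star c)`, which is real and lies in `[0,1]`. -/
theorem vacuum_state_determined_by_v
    {A : Type*} [Ring A] [Algebra ℂ A] [StarRing A] [StarModule ℂ A]
    (c N : A)
    (hc2 : c * c = 0)
    (hcar : c * star c + star c * c = 1)
    (hNc : N * c - c * N = -c)
    (hNcs : N * star c - star c * N = star c)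
    (hNsa : star N = N)
    (hgen : Algebra.adjoin ℂ {c, star c, N} = ⊤)
    (ω ω' : A →ₗ[ℂ] ℂ)
    (hω1 : ω 1 = 1) (hω'1 : ω' 1 = 1)
    (hωpos : ∀ a : A, 0 ≤ ω (star a * a))
    (hω'pos : ∀ a : A, 0 ≤ ω' (star a * a))
    (hωvac : ∀ a : A, ω (a * N) = 0)
    (hω'vac : ∀ a : A, ω' (a * N) = 0) :
    (ω (c * star c)).im = 0 ∧
    (ω (c * star c)).re ∈ Set.Icc (0 : ℝ) 1 ∧
    (ω (c * star c) = ω' (c * star c) → ω = ω') := by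
  -- algebraic consequences of the relations
  have hs2 : star c * star c = 0 := by
    have h := congrArg star hc2
    simpa [star_mul] using h
  have hNc' : N * c = -c + c * N := by
    have h := sub_eq_iff_eq_add.mp hNc
    exact h
  have hNcs' : N * star c = star c + star c * N := by
    exact sub_eq_iff_eq_add.mp hNcs
  have e1 : star c * c = 1 - c * star c := by
    rw [eq_sub_iff_add_eq, add_comm]; exact hcar
  have hNccs : N * (c * star c) = (c * star c) * N := by
    calc N * (c * star c) = (N * c) * star c := by rw [mul_assoc]
      _ = (-c + c * N) * star c := by rw [hNc']
      _ = -(c * star c) + c * (N * star c) := by rw [add_mul, neg_mul, mul_assoc]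
      _ = -(c * star c) + c * (star c + star c * N) := by rw [hNcs']
      _ = (c * star c) * N := by rw [mul_add, ← mul_assoc]; abel
  have hcsccs : star c * (c * star c) = star c := by
    rw [← mul_assoc, e1, sub_mul, one_mul, mul_assoc, hs2, mul_zero, sub_zero]
  have hcccs : c * (c * star c) = 0 := by rw [← mul_assoc, hc2, zero_mul]
  -- parts 1 and 2
  have hpos1 : 0 ≤ ω (c * star c) := by
    have h := hωpos (star c); rwa [star_star] at h
  have hpos2 : 0 ≤ ω (star c * c) := hωpos c
  have hsum : ω (c * star c) + ω (star c * c) = 1 := by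
    rw [← map_add, hcar, hω1]
  have him : (ω (c * star c)).im = 0 := ((Complex.le_def.mp hpos1).2).symm
  have hre0 : 0 ≤ (ω (c * star c)).re := (Complex.le_def.mp hpos1).1
  have hre1 : (ω (c * star c)).re ≤ 1 := by
    have h2 : 0 ≤ (ω (star c * c)).re := (Complex.le_def.mp hpos2).1
    have h3 : (ω (c * star c)).re + (ω (star c * c)).re = 1 := by
      have := congrArg Complex.re hsum
      simpa using this
    linarith
  refine ⟨him, ⟨hre0, hre1⟩, ?_⟩
  intro hv
  -- vanishing of ω and ω' on c and star c
  have hωNb := vac_nb_zero N hNsa ω hωpos hωvac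
  have hω'Nb := vac_nb_zero N hNsa ω' hω'pos hω'vac
  have hcc : c = c * N - N * c := by rw [← neg_sub, hNc, neg_neg]
  have hscc : star c = N * star c - star c * N := hNcs.symm
  have hωc : ω c = 0 := by rw [hcc, map_sub, hωvac, hωNb, sub_zero]
  have hω'c : ω' c = 0 := by rw [hcc, map_sub, hω'vac, hω'Nb, sub_zero]
  have hωsc : ω (star c) = 0 := by rw [hscc, map_sub, hωvac, hωNb, sub_zero]
  have hω'sc : ω' (star c) = 0 := by rw [hscc, map_sub, hω'vac, hω'Nb, sub_zero]
  -- the spanning submodule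
  set Vs : Set A := {1, c, star c, c * star c} with hVs
  set W : Submodule ℂ A :=
    Submodule.span ℂ Vs ⊔ LinearMap.range (LinearMap.mulRight ℂ N) with hWdef
  have hVW : ∀ v ∈ Vs, v ∈ W := fun v hv' =>
    Submodule.mem_sup_left (Submodule.subset_span hv')
  have h1W : (1 : A) ∈ W := hVW 1 (by simp [hVs])
  have hcW : c ∈ W := hVW c (by simp [hVs])
  have hscW : star c ∈ W := hVW _ (by simp [hVs])
  have hccsW : c * star c ∈ W := hVW _ (by simp [hVs])
  have hJmem : ∀ x : A, x * N ∈ W := fun x =>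
    Submodule.mem_sup_right (LinearMap.mem_range.mpr ⟨x, by simp⟩)
  -- generators stabilize W
  have hgv : ∀ g ∈ ({c, star c, N} : Set A), ∀ v ∈ Vs, g * v ∈ W := by
    intro g hg v hv'
    simp only [hVs, Set.mem_insert_iff, Set.mem_singleton_iff] at hg hv'
    rcases hg with hg | hg | hg <;>
      rcases hv' with hv' | hv' | hv' | hv' <;> rw [hg, hv']
    · rw [mul_one]; exact hcW
    · rw [hc2]; exact zero_mem W
    · exact hccsW
    · rw [hcccs]; exact zero_mem W
    · rw [mul_one]; exact hscW
    · rw [e1]; exact sub_mem h1W hccsW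
    · rw [hs2]; exact zero_mem W
    · rw [hcsccs]; exact hscW
    · rw [mul_one, ← one_mul N]; exact hJmem 1
    · rw [hNc']; exact add_mem (neg_mem hcW) (hJmem c)
    · rw [hNcs']; exact add_mem hscW (hJmem (star c))
    · rw [hNccs]; exact hJmem _
  have hstab : ∀ g ∈ ({c, star c, N} : Set A), ∀ w ∈ W, g * w ∈ W := by
    intro g hg w hw
    rw [hWdef] at hw
    obtain ⟨v, hv', j, hj, rfl⟩ := Submodule.mem_sup.mp hw
    obtain ⟨x, rfl⟩ := LinearMap.mem_range.mp hj
    clear hw hj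
    rw [mul_add]
    refine add_mem ?_ ?_
    · induction hv' using Submodule.span_induction with
      | mem y hy => exact hgv g hg y hy
      | zero => rw [mul_zero]; exact zero_mem W
      | add a b _ _ iha ihb => rw [mul_add]; exact add_mem iha ihb
      | smul r a _ iha => rw [mul_smul_comm]; exact Submodule.smul_mem W r iha
    · have hx : g * (LinearMap.mulRight ℂ N x) = (g * x) * N := by
        simp [mul_assoc]
      rw [hx]; exact hJmem _
  -- all of A stabilizes W
  have hAW : ∀ x : A, ∀ w ∈ W, x * w ∈ W := by
    intro x
    have hx : x ∈ Algebra.adjoin ℂ ({c, star c, N} : Set A) := by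
      rw [hgen]; trivial
    induction hx using Algebra.adjoin_induction with
    | mem y hy => exact hstab y hy
    | algebraMap r =>
      intro w hw
      rw [← Algebra.smul_def]
      exact Submodule.smul_mem W r hw
    | add a b _ _ iha ihb =>
      intro w hw
      rw [add_mul]
      exact add_mem (iha w hw) (ihb w hw)
    | mul a b _ _ iha ihb =>
      intro w hw
      rw [mul_assoc]
      exact iha _ (ihb w hw)
  have htop : ∀ x : A, x ∈ W := by
    intro x
    have h := hAW x 1 h1W
    rwa [mul_one] at h
  -- ω and ω' agree on W = ⊤
  refine LinearMap.ext fun x => ?_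
  have hx := htop x
  rw [hWdef] at hx
  obtain ⟨v, hv', j, hj, rfl⟩ := Submodule.mem_sup.mp hx
  obtain ⟨y, rfl⟩ := LinearMap.mem_range.mp hj
  clear hx hj
  have hjy : (LinearMap.mulRight ℂ N) y = y * N := by simp
  rw [map_add, map_add, hjy, hωvac, hω'vac]
  congr 1
  induction hv' using Submodule.span_induction with
  | mem z hz =>
    rcases hz with rfl | rfl | rfl | rfl
    · rw [hω1, hω'1]
    · rw [hωc, hω'c]
    · rw [hωsc, hω'sc]
    · exact hv
  | zero => rw [map_zero, map_zero]
  | add a b _ _ iha ihb => rw [map_add, map_add, iha, ihb]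
  | smul r a _ iha => rw [map_smul, map_smul, iha]
end

section
/- If B_q is a right eigenvector of a Hermitean observable Q with right eigenvalue q, i.e. ω(A Q B_q) = q ω(A B_q) for all A and ω(B_q* B_q) ≠ 0, then q is real and B_q* is a left eigenvector of Q with the same eigenvalue, i.e. ω(B_q* Q A) = q ω(B_q* A) for all A. -/
open ComplexOrder

lemma state_herm
    {A : Type*} [Ring A] [Algebra ℂ A] [StarRing A] [StarModule ℂ A]
    (ω : A →ₗ[ℂ] ℂ) (hωpos : ∀ a : A, 0 ≤ ω (star a * a)) (x y : A) :
    ω (star y * x) = starRingEnd ℂ (ω (star x * y)) := by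
  have him : ∀ a : A, (ω (star a * a)).im = 0 := by
    intro a
    have := hωpos a
    rw [Complex.le_def] at this
    exact this.2.symm
  have e1 := him (x + y)
  have e2 := him (x + Complex.I • y)
  simp only [star_add, star_smul, mul_add, add_mul, map_add, map_smul,
    smul_mul_assoc, mul_smul_comm, Complex.star_def, Complex.conj_I,
    smul_smul, neg_mul, smul_eq_mul, neg_smul, map_neg] at e1 e2
  simp only [Complex.add_im, Complex.mul_im, Complex.I_re, Complex.I_im,
    Complex.neg_im, Complex.mul_re, Complex.neg_re] at e1 e2
  have hx := him x; have hy := him y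
  apply Complex.ext <;>
    simp only [Complex.conj_re, Complex.conj_im] <;> nlinarith [hx, hy]

/-- If `B` is a right eigenvector of a Hermitean observable `Q`
with right eigenvalue `q` for a state `ω` (i.e. `ω (A Q B) = q ω (A B)` for
all `A` and `ω (B* B) ≠ 0`), then `q` is real and `B*` is a left eigenvector
of `Q` with the same eigenvalue: `ω (B* Q A) = q ω (B* A)` for all `A`. -/
theorem right_eigenvector_real_and_left
    {A : Type*} [Ring A] [Algebra ℂ A] [StarRing A] [StarModule ℂ A]
    (ω : A →ₗ[ℂ] ℂ)
    (hω1 : ω 1 = 1)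
    (hωpos : ∀ a : A, 0 ≤ ω (star a * a))
    (Q B : A) (q : ℂ)
    (hQsa : star Q = Q)
    (hBnz : ω (star B * B) ≠ 0)
    (hright : ∀ a : A, ω (a * Q * B) = q * ω (a * B)) :
    q.im = 0 ∧ (∀ a : A, ω (star B * Q * a) = q * ω (star B * a)) := by
  have herm := state_herm ω hωpos
  have hQB : ω (star B * Q * B) = starRingEnd ℂ (ω (star B * Q * B)) := by
    have h := herm B (Q * B)
    rw [star_mul, hQsa, ← mul_assoc] at h
    rw [mul_assoc] at h ⊢
    exact h
  have key := hright (star B)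
  have hBBreal : ω (star B * B) = starRingEnd ℂ (ω (star B * B)) := herm B B
  have hqc : q = starRingEnd ℂ q := by
    have h1 : q * ω (star B * B) = starRingEnd ℂ (q * ω (star B * B)) := by
      rw [← key, ← hQB, key]
    rw [(starRingEnd ℂ).map_mul, ← hBBreal] at h1
    exact mul_right_cancel₀ hBnz h1
  have hqim : q.im = 0 := by
    have := congrArg Complex.im hqc
    simp [Complex.conj_im] at this
    linarith
  refine ⟨hqim, fun a => ?_⟩
  have h1 : ω (star B * Q * a) = starRingEnd ℂ (ω (star a * (Q * B))) := by
    have h := herm a (Q * B)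
    rw [star_mul, hQsa] at h
    exact h
  rw [h1, ← mul_assoc, hright (star a), (starRingEnd ℂ).map_mul, ← hqc,
    ← herm a B]
end

section
/- The Bogoliubov–Valatin state ω^{BV}_h(A) = ⟨BV(h)| A |BV(h)⟩ agrees with the vacuum state ω_{1-h,1-h} = (1-h)ω_{1,1} + h ω_{0,0} on all sixteen basis elements of the CAR algebra over ℂ² except c₁c₂ and c₁*c₂*, where ω^{BV}_h(c₁c₂) = -√(h(1-h)) ≠ 0 for 0 < h < 1 while ω_{1-h,1-h}(c₁c₂) = 0. -/
/-!
Let `N = c₁*c₁ + c₂*c₂` be the number operator. Then `Ω` and `Ω' = c₁*c₂*Ω` are eigenvectors of `N`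
with eigenvalues `0` and `2`, and expanding `BV(h) = √(1-h) Ω + √h Ω'` gives
`ω^{BV}_h(T) = ω_{1-h,1-h}(T) + √(h(1-h)) (⟨Ω, T Ω'⟩ + ⟨Ω', T Ω⟩)`.
Every basis monomial `T` satisfies `[N, T] = k T`, where `k` is the number of creators minus the
number of annihilators, and for self-adjoint `N` the matrix element `⟨x, T y⟩` between eigenvectors
vanishes unless their eigenvalues differ by `k`. Hence the cross terms vanish unless `k = ±2`, which
among the sixteen basis elements happens only for `c₁c₂` and `c₁*c₂*`; there `c₁c₂Ω' = -Ω`.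
-/

open ContinuousLinearMap

theorem eq_zero_of_add_self_eq_zero (K : Type*) {M : Type*} [DivisionRing K] [CharZero K]
    [AddCommGroup M] [Module K M] {x : M} (hx : x + x = 0) : x = 0 :=
  (smul_eq_zero.mp (by rwa [two_smul] : (2 : K) • x = 0)).resolve_left two_ne_zero

section Charge

variable {R A : Type*} [CommRing R] [Ring A] [Algebra R A]

def HasCharge (N T : A) (k : R) : Prop := N * T - T * N = k • T

namespace HasCharge

variable {N S T : A} {j k : R}

theorem one : HasCharge N (1 : A) (0 : R) := by simp [HasCharge]

theorem mul (hS : HasCharge N S j) (hT : HasCharge N T k) : HasCharge N (S * T) (j + k) := by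
  unfold HasCharge at *
  calc N * (S * T) - S * T * N = (N * S - S * N) * T + S * (N * T - T * N) := by noncomm_ring
    _ = (j + k) • (S * T) := by rw [hS, hT, smul_mul_assoc, mul_smul_comm, add_smul]

theorem add (hS : HasCharge N S k) (hT : HasCharge N T k) : HasCharge N (S + T) k := by
  unfold HasCharge at *
  calc N * (S + T) - (S + T) * N = (N * S - S * N) + (N * T - T * N) := by noncomm_ring
    _ = k • (S + T) := by rw [hS, hT, smul_add]

theorem sub (hS : HasCharge N S k) (hT : HasCharge N T k) : HasCharge N (S - T) k := by
  unfold HasCharge at *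
  calc N * (S - T) - (S - T) * N = (N * S - S * N) - (N * T - T * N) := by noncomm_ring
    _ = k • (S - T) := by rw [hS, hT, smul_sub]

theorem smul (r : R) (hT : HasCharge N T k) : HasCharge N (r • T) k := by
  unfold HasCharge at *
  rw [mul_smul_comm, smul_mul_assoc, ← smul_sub, hT, smul_comm]

theorem star [StarRing R] [StarRing A] [StarModule R A] (hN : IsSelfAdjoint N)
    (hT : HasCharge N T k) : HasCharge N (star T) (-star k) := by
  unfold HasCharge at *
  have := congrArg Star.star hT
  rw [star_sub, star_mul, star_mul, hN.star_eq, star_smul] at this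
  rw [neg_smul, ← this, neg_sub]

end HasCharge

theorem hasCharge_neg_one_of_car {c₁ c₂ d₁ d₂ : A} (hc₁ : c₁ * c₁ = 0)
    (hc₁c₂ : c₁ * c₂ + c₂ * c₁ = 0) (hd₁c₁ : d₁ * c₁ + c₁ * d₁ = 1)
    (hd₂c₁ : d₂ * c₁ + c₁ * d₂ = 0) : HasCharge (d₁ * c₁ + d₂ * c₂) c₁ (-1 : R) := by
  have key : (d₁ * c₁ + d₂ * c₂) * c₁ - c₁ * (d₁ * c₁ + d₂ * c₂) + c₁ =
      2 * (d₁ * (c₁ * c₁)) + (1 - (d₁ * c₁ + c₁ * d₁)) * c₁ + d₂ * (c₁ * c₂ + c₂ * c₁)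
        - (d₂ * c₁ + c₁ * d₂) * c₂ := by noncomm_ring
  rw [hc₁, hc₁c₂, hd₁c₁, hd₂c₁] at key
  rw [HasCharge, neg_one_smul, eq_neg_iff_add_eq_zero, key]
  simp

theorem hasCharge_of_car [StarRing R] [StarRing A] [StarModule R A] {c₁ c₂ d₁ d₂ : A}
    (hd₁ : d₁ = star c₁) (hd₂ : d₂ = star c₂) (hc₁ : c₁ * c₁ = 0) (hc₂ : c₂ * c₂ = 0)
    (hc₁c₂ : c₁ * c₂ + c₂ * c₁ = 0) (hd₁c₁ : d₁ * c₁ + c₁ * d₁ = 1)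
    (hd₁c₂ : d₁ * c₂ + c₂ * d₁ = 0) (hd₂c₁ : d₂ * c₁ + c₁ * d₂ = 0)
    (hd₂c₂ : d₂ * c₂ + c₂ * d₂ = 1) :
    HasCharge (d₁ * c₁ + d₂ * c₂) c₁ (-1 : R) ∧ HasCharge (d₁ * c₁ + d₂ * c₂) c₂ (-1 : R) ∧
      HasCharge (d₁ * c₁ + d₂ * c₂) d₁ (1 : R) ∧ HasCharge (d₁ * c₁ + d₂ * c₂) d₂ (1 : R) := by
  have hN : IsSelfAdjoint (d₁ * c₁ + d₂ * c₂) := by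
    rw [hd₁, hd₂]
    exact (IsSelfAdjoint.star_mul_self c₁).add (IsSelfAdjoint.star_mul_self c₂)
  have h₁ : HasCharge (d₁ * c₁ + d₂ * c₂) c₁ (-1 : R) :=
    hasCharge_neg_one_of_car hc₁ hc₁c₂ hd₁c₁ hd₂c₁
  have h₂ : HasCharge (d₁ * c₁ + d₂ * c₂) c₂ (-1 : R) := by
    rw [add_comm]
    exact hasCharge_neg_one_of_car hc₂ (by rwa [add_comm]) hd₂c₂ hd₁c₂
  refine ⟨h₁, h₂, ?_, ?_⟩
  · simpa [hd₁] using h₁.star hN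
  · simpa [hd₂] using h₂.star hN

end Charge

section Operators

variable {R M : Type*} [Ring R] [TopologicalSpace M] [AddCommGroup M] [IsTopologicalAddGroup M]
  [Module R M] {a b c d : M →L[R] M}

theorem apply_apply_eq_self_of_car {x : M} (hcd : d * c + c * d = 1) (hx : c x = 0) :
    c (d x) = x := by
  simpa [mul_apply_eq_comp, hx] using congrArg (· x) hcd

theorem apply_apply_eq_neg_of_anticommute (hab : a * b + b * a = 0) (x : M) :
    b (a x) = -a (b x) :=
  eq_neg_of_add_eq_zero_right (by simpa [mul_apply_eq_comp] using congrArg (· x) hab)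

theorem mul_apply_pair_eq_neg {c₁ c₂ d₁ d₂ : M →L[R] M} {x : M} (hd₁c₁ : d₁ * c₁ + c₁ * d₁ = 1)
    (hd₁c₂ : d₁ * c₂ + c₂ * d₁ = 0) (hd₂c₂ : d₂ * c₂ + c₂ * d₂ = 1) (hc₁ : c₁ x = 0)
    (hc₂ : c₂ x = 0) : (c₁ * c₂) (d₁ (d₂ x)) = -x := by
  rw [mul_apply_eq_comp, apply_apply_eq_neg_of_anticommute hd₁c₂,
    apply_apply_eq_self_of_car hd₂c₂ hc₂, map_neg, apply_apply_eq_self_of_car hd₁c₁ hc₁]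

end Operators

theorem HasCharge.apply_of_apply_eq_smul {R M : Type*} [CommRing R] [TopologicalSpace M]
    [AddCommGroup M] [IsTopologicalAddGroup M] [Module R M] [ContinuousConstSMul R M]
    {N T : M →L[R] M} {k b : R} {y : M} (hT : HasCharge N T k) (hy : N y = b • y) :
    N (T y) = (b + k) • T y := by
  have := congrArg (· y) hT
  simp only [sub_apply, mul_apply_eq_comp, smul_apply, hy, map_smul] at this
  rw [add_smul, ← this, add_sub_cancel]

section InnerProduct

variable {𝕜 E : Type*} [RCLike 𝕜] [NormedAddCommGroup E] [InnerProductSpace 𝕜 E]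

local notation "⟪" x ", " y "⟫" => inner 𝕜 x y

theorem inner_apply_eq_zero_of_hasCharge [CompleteSpace E] {N T : E →L[𝕜] E} {k b : 𝕜} {a : ℝ}
    {x y : E} (hN : IsSelfAdjoint N) (hT : HasCharge N T k) (hx : N x = (a : 𝕜) • x)
    (hy : N y = b • y) (hne : b + k ≠ a) : ⟪x, T y⟫ = 0 := by
  have h : (b + k) * ⟪x, T y⟫ = a * ⟪x, T y⟫ := by
    have hsymm : ⟪N x, T y⟫ = ⟪x, N (T y)⟫ := hN.isSymmetric x (T y)
    rw [← inner_smul_right, ← hT.apply_of_apply_eq_smul hy, ← hsymm, hx, inner_smul_left,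
      RCLike.conj_ofReal]
  exact (mul_eq_zero.mp (by rw [sub_mul, h, sub_self] : (b + k - a) * ⟪x, T y⟫ = 0)).resolve_left
    (sub_ne_zero.mpr hne)

theorem inner_sqrt_smul_add_sqrt_smul_apply (T : E →L[𝕜] E) {h : ℝ} (h0 : 0 ≤ h) (h1 : h ≤ 1)
    (x y : E) :
    ⟪(√(1 - h) : 𝕜) • x + (√h : 𝕜) • y, T ((√(1 - h) : 𝕜) • x + (√h : 𝕜) • y)⟫ =
      (1 - (h : 𝕜)) * ⟪x, T x⟫ + (h : 𝕜) * ⟪y, T y⟫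
        + (√(h * (1 - h)) : 𝕜) * (⟪x, T y⟫ + ⟪y, T x⟫) := by
  have hs : (√(1 - h) : 𝕜) * (√(1 - h) : 𝕜) = 1 - h := by
    rw [← RCLike.ofReal_mul, Real.mul_self_sqrt (by linarith), RCLike.ofReal_sub, RCLike.ofReal_one]
  have ht : (√h : 𝕜) * (√h : 𝕜) = h := by rw [← RCLike.ofReal_mul, Real.mul_self_sqrt h0]
  simp only [map_add, map_smul, inner_add_left, inner_add_right, inner_smul_left,
    inner_smul_right, RCLike.conj_ofReal, Real.sqrt_mul h0, RCLike.ofReal_mul]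
  linear_combination ⟪x, T x⟫ * hs + ⟪y, T y⟫ * ht

theorem inner_sqrt_smul_add_sqrt_smul_apply_of_hasCharge [CompleteSpace E] {N T : E →L[𝕜] E}
    {k : 𝕜} {x y : E} {h : ℝ} (h0 : 0 ≤ h) (h1 : h ≤ 1) (hN : IsSelfAdjoint N)
    (hx : N x = ((0 : ℝ) : 𝕜) • x) (hy : N y = ((2 : ℝ) : 𝕜) • y) (hT : HasCharge N T k)
    (hk : k ≠ 2) (hk' : k ≠ -2) :
    ⟪(√(1 - h) : 𝕜) • x + (√h : 𝕜) • y, T ((√(1 - h) : 𝕜) • x + (√h : 𝕜) • y)⟫ =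
      (1 - (h : 𝕜)) * ⟪x, T x⟫ + (h : 𝕜) * ⟪y, T y⟫ := by
  have hxy : ((2 : ℝ) : 𝕜) + k ≠ ((0 : ℝ) : 𝕜) := by
    contrapose! hk'
    push_cast at hk'
    linear_combination hk'
  have hyx : ((0 : ℝ) : 𝕜) + k ≠ ((2 : ℝ) : 𝕜) := by
    push_cast
    rwa [zero_add]
  rw [inner_sqrt_smul_add_sqrt_smul_apply T h0 h1, inner_apply_eq_zero_of_hasCharge hN hT hx hy hxy,
    inner_apply_eq_zero_of_hasCharge hN hT hy hx hyx, add_zero, mul_zero, add_zero]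

end InnerProduct

/-- The Bogoliubov–Valatin state `ω^{BV}_h(A) = ⟨BV|A|BV⟩`
agrees with the vacuum state `ω_{1-h,1-h} = (1-h) ω_{1,1} + h ω_{0,0}` (here
realized by the vectors `Ω` and `Ω' = c₁* c₂* Ω`) on all sixteen basis
elements of the CAR algebra over `ℂ²` except `c₁c₂` and `c₁*c₂*`; moreover
`ω^{BV}_h(c₁c₂) = -√(h(1-h)) ≠ 0` for `0 < h < 1` while
`ω_{1-h,1-h}(c₁c₂) = 0`. -/
theorem bogoliubov_valatin_state_vs_vacuum_state
    (c₁ c₂ : EuclideanSpace ℂ (Fin 4) →L[ℂ] EuclideanSpace ℂ (Fin 4))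
    (d₁ d₂ : EuclideanSpace ℂ (Fin 4) →L[ℂ] EuclideanSpace ℂ (Fin 4))
    (hd₁ : d₁ = ContinuousLinearMap.adjoint c₁)
    (hd₂ : d₂ = ContinuousLinearMap.adjoint c₂)
    (acc11 : c₁ * c₁ + c₁ * c₁ = 0)
    (acc12 : c₁ * c₂ + c₂ * c₁ = 0)
    (acc22 : c₂ * c₂ + c₂ * c₂ = 0)
    (car11 : d₁ * c₁ + c₁ * d₁ = 1)
    (car12 : d₁ * c₂ + c₂ * d₁ = 0)
    (car21 : d₂ * c₁ + c₁ * d₂ = 0)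
    (car22 : d₂ * c₂ + c₂ * d₂ = 1)
    (Ω : EuclideanSpace ℂ (Fin 4))
    (hΩnorm : ‖Ω‖ = 1)
    (hΩ1 : c₁ Ω = 0) (hΩ2 : c₂ Ω = 0)
    (h : ℝ) (h0 : 0 ≤ h) (h1 : h ≤ 1) :
    let BV : EuclideanSpace ℂ (Fin 4) :=
      (Real.sqrt (1 - h) : ℂ) • Ω + (Real.sqrt h : ℂ) • d₁ (d₂ Ω)
    let Ω' : EuclideanSpace ℂ (Fin 4) := d₁ (d₂ Ω)
    let ωBV : (EuclideanSpace ℂ (Fin 4) →L[ℂ] EuclideanSpace ℂ (Fin 4)) → ℂ :=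
      fun T => inner ℂ BV (T BV)
    let ωmix : (EuclideanSpace ℂ (Fin 4) →L[ℂ] EuclideanSpace ℂ (Fin 4)) → ℂ :=
      fun T => (1 - (h : ℂ)) * inner ℂ Ω (T Ω) + (h : ℂ) * inner ℂ Ω' (T Ω')
    (∀ T ∈ [(1 : EuclideanSpace ℂ (Fin 4) →L[ℂ] EuclideanSpace ℂ (Fin 4)),
        ((1 : ℂ) / 2) • (c₁ * d₁ + c₂ * d₂),
        c₁ * c₂ * d₂ * d₁,
        c₁ * d₂,
        ((1 : ℂ) / 2) • (c₁ * d₁ - c₂ * d₂),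
        c₂ * d₁,
        c₁,
        c₁ * c₂ * d₂,
        c₂,
        c₂ * c₁ * d₁,
        d₂,
        c₁ * d₁ * d₂,
        d₁,
        c₂ * d₂ * d₁], ωBV T = ωmix T) ∧
    ωBV (c₁ * c₂) = -(Real.sqrt (h * (1 - h)) : ℂ) ∧
    (0 < h → h < 1 → ωBV (c₁ * c₂) ≠ 0) ∧
    ωmix (c₁ * c₂) = 0 := by
  intro BV Ω' ωBV ωmix
  obtain ⟨N, hN_def⟩ : ∃ N, N = d₁ * c₁ + d₂ * c₂ := ⟨_, rfl⟩
  have hN : IsSelfAdjoint N := by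
    simp [hN_def, hd₁, hd₂, isSelfAdjoint_iff', mul_def, adjoint_comp]
  obtain ⟨hc₁, hc₂, hd₁c, hd₂c⟩ := hN_def ▸ hasCharge_of_car (R := ℂ) hd₁ hd₂
    (eq_zero_of_add_self_eq_zero ℂ acc11) (eq_zero_of_add_self_eq_zero ℂ acc22) acc12
    car11 car12 car21 car22
  have hNΩ : N Ω = ((0 : ℝ) : ℂ) • Ω := by simp [hN_def, mul_apply_eq_comp, hΩ1, hΩ2]
  have hNΩ' : N Ω' = ((2 : ℝ) : ℂ) • Ω' := by
    convert hd₁c.apply_of_apply_eq_smul (hd₂c.apply_of_apply_eq_smul hNΩ) using 2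
    norm_num
  have hpair := hc₁.mul hc₂
  have hmix : ωmix (c₁ * c₂) = 0 := by
    simp only [ωmix, inner_apply_eq_zero_of_hasCharge hN hpair hNΩ hNΩ (by norm_num),
      inner_apply_eq_zero_of_hasCharge hN hpair hNΩ' hNΩ' (by norm_num), mul_zero, add_zero]
  have hBV : ωBV (c₁ * c₂) = -(√(h * (1 - h)) : ℂ) := by
    rw [show ωBV (c₁ * c₂) = ωmix (c₁ * c₂) + _ from
        inner_sqrt_smul_add_sqrt_smul_apply _ h0 h1 Ω Ω', hmix,
      mul_apply_pair_eq_neg car11 car12 car22 hΩ1 hΩ2,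
      inner_apply_eq_zero_of_hasCharge hN hpair hNΩ' hNΩ (by norm_num), inner_neg_right,
      inner_self_eq_norm_sq_to_K, hΩnorm]
    simp
  refine ⟨fun T hT => ?_, hBV, fun hpos hlt => ?_, hmix⟩
  · fin_cases hT <;> apply inner_sqrt_smul_add_sqrt_smul_apply_of_hasCharge h0 h1 hN hNΩ hNΩ'
    -- reducible unification keeps the failing branches of this search cheap
    all_goals repeat with_reducible_and_instances
      first
      | exact hc₁
      | exact hc₂
      | exact hd₁c
      | exact hd₂c
      | exact HasCharge.one
      | apply HasCharge.mul
      | apply HasCharge.add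
      | apply HasCharge.sub
      | apply HasCharge.smul
    all_goals norm_num
  · rw [hBV, neg_ne_zero, Complex.ofReal_ne_zero, Real.sqrt_ne_zero']
    nlinarith
end
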